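/- Let C' be a finite subset of the open northern hemisphere {x ∈ S^d : x_{d+1} > 0}, let P_N be the central projection onto H_N = {x_{d+1} = 1}, and let ρ' ∈ (0, π/2). Then the Euclidean ball B(e_{d+1}, tan ρ') ⊆ H_N is contained in conv(P_N(C')) if and only if the spherical cap C(e_{d+1}, ρ') is contained in the spherical convex hull of C'. -/

import Mathlib

open Real Set
open scoped RealInnerProductSpace

noncomputable section

/-- Euclidean space `ℝ^n`. -/
abbrev E (n : ℕ) := EuclideanSpace ℝ (Fin n)

/-- The unit sphere `S^{n-1} ⊆ ℝ^n`. -/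
def unitSphere (n : ℕ) : Set (E n) := Metric.sphere 0 1

/-- The spherical cap with center `v` and spherical radius `ρ`. -/
def cap {n : ℕ} (v : E n) (ρ : ℝ) : Set (E n) := {u ∈ unitSphere n | Real.cos ρ ≤ ⟪u, v⟫}

/-- The last standard basis vector `e_{d+1}` of `ℝ^{d+1}`. -/
def eLast (d : ℕ) : E (d + 1) := EuclideanSpace.single (Fin.last d) 1

/-- Central projection from the origin onto the hyperplane `{x : x_{d+1} = 1}`,
identified with `ℝ^d` (with origin `e_{d+1}`). -/
def PN {d : ℕ} (x : E (d + 1)) : E d := WithLp.toLp 2 (fun i : Fin d => x i.castSucc / x (Fin.last d))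

/-- Points of the shorter great-circle arc between unit vectors `u` and `v`
(for `u`, `v` in an open hemisphere): normalized nonnegative combinations. -/
def arcPts {n : ℕ} (u v : E n) : Set (E n) :=
  {w | ∃ a b : ℝ, 0 ≤ a ∧ 0 ≤ b ∧ a • u + b • v ≠ 0 ∧ w = ‖a • u + b • v‖⁻¹ • (a • u + b • v)}

/-- A set `K ⊆ S^{n-1}` is spherically convex if it is the whole sphere, or it is
contained in an open hemisphere and contains the shorter arc between any two of its points. -/
def IsSphConvex {n : ℕ} (K : Set (E n)) : Prop :=
  K = unitSphere n ∨
    ((∃ v : E n, ∀ x ∈ K, 0 < ⟪x, v⟫) ∧ ∀ u ∈ K, ∀ w ∈ K, arcPts u w ⊆ K)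

/-- The spherical convex hull: the intersection of all spherically convex subsets
of the sphere containing `C`. -/
def sconv {n : ℕ} (C : Set (E n)) : Set (E n) :=
  ⋂₀ {K | IsSphConvex K ∧ K ⊆ unitSphere n ∧ C ⊆ K}

/-- The polar of a set `S ⊆ ℝ^n`. -/
def polar {n : ℕ} (S : Set (E n)) : Set (E n) := {x | ∀ s ∈ S, ⟪x, s⟫ ≤ 1}

end

/-!
Both hulls are read off the cone hull `pos C'` of `C'`. The cone over a spherically convex set
is closed under nonnegative combinations (this is what containing the arcs means), while for `C'`
in an open hemisphere the unit vectors of `pos C'` form a spherically convex set; hence the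
spherical convex hull of `C'` is `S^d ∩ pos C'`. On the other side, `P_N (y + z)` is the convex
combination of `P_N y` and `P_N z` with weights proportional to `y_{d+1}` and `z_{d+1}`, so a point
`y` with `y_{d+1} > 0` lies in `pos C'` iff `P_N y ∈ conv (P_N C')`. Finally, for a unit vector `u`
with `u_{d+1} > 0` we have `‖P_N u‖² + 1 = u_{d+1}⁻²` and `tan² ρ + 1 = cos⁻² ρ`, so `u` lies in the
cap `C(e_{d+1}, ρ)` iff `‖P_N u‖ ≤ tan ρ`.
-/

section Sphere

variable {n : ℕ}

lemma normalize_mem_unitSphere {y : E n} (hy : y ≠ 0) : ‖y‖⁻¹ • y ∈ unitSphere n := by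
  simp [unitSphere, norm_smul, hy]

lemma normalize_smul_of_pos {c : ℝ} (hc : 0 < c) (y : E n) :
    ‖c • y‖⁻¹ • c • y = ‖y‖⁻¹ • y := by
  rw [norm_smul, Real.norm_of_nonneg hc.le, smul_smul]
  congr 1
  field_simp

lemma IsSphConvex.arcPts_subset {K : Set (E n)} (hK : IsSphConvex K) {u w : E n}
    (hu : u ∈ K) (hw : w ∈ K) : arcPts u w ⊆ K := by
  rcases hK with rfl | ⟨-, harc⟩
  · rintro _ ⟨a, b, -, -, hne, rfl⟩
    exact normalize_mem_unitSphere hne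
  · exact harc u hu w hw

lemma eq_zero_or_inner_pos_of_mem_hull {C : Set (E n)} {v : E n}
    (hC : ∀ x ∈ C, 0 < ⟪x, v⟫) {y : E n} (hy : y ∈ PointedCone.hull ℝ C) :
    y = 0 ∨ 0 < ⟪y, v⟫ := by
  induction hy using Submodule.span_induction with
  | mem x hx => exact .inr (hC x hx)
  | zero => exact .inl rfl
  | add x y _ _ hx hy =>
    rcases hx with rfl | hx
    · simpa using hy
    rcases hy with rfl | hy
    · simpa using Or.inr hx
    exact .inr (by rw [inner_add_left]; positivity)
  | smul a x _ hx =>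
    obtain ⟨a, ha⟩ := a
    rw [Nonneg.mk_smul]
    rcases ha.eq_or_lt with rfl | ha
    · exact .inl (zero_smul _ x)
    rcases hx with rfl | hx
    · exact .inl (smul_zero _)
    exact .inr (by rw [real_inner_smul_left]; positivity)

lemma eq_zero_or_normalize_mem_of_mem_hull {C K : Set (E n)}
    (hK : IsSphConvex K) (hC : C ⊆ unitSphere n) (hCK : C ⊆ K) {y : E n}
    (hy : y ∈ PointedCone.hull ℝ C) : y = 0 ∨ ‖y‖⁻¹ • y ∈ K := by
  induction hy using Submodule.span_induction with
  | mem x hx =>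
    have hx1 : ‖x‖ = 1 := by simpa [unitSphere] using hC hx
    exact .inr (by simpa [hx1] using hCK hx)
  | zero => exact .inl rfl
  | add x y _ _ hx hy =>
    rcases eq_or_ne x 0 with rfl | hx0
    · simpa using hy
    rcases eq_or_ne y 0 with rfl | hy0
    · simpa using hx
    refine or_iff_not_imp_left.2 fun hxy => hK.arcPts_subset (hx.resolve_left hx0)
      (hy.resolve_left hy0) ⟨‖x‖, ‖y‖, norm_nonneg x, norm_nonneg y, ?_, ?_⟩ <;>
    rw [smul_inv_smul₀ (norm_ne_zero_iff.2 hx0), smul_inv_smul₀ (norm_ne_zero_iff.2 hy0)]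
    exact hxy
  | smul a x _ hx =>
    obtain ⟨a, ha⟩ := a
    rw [Nonneg.mk_smul]
    rcases ha.eq_or_lt with rfl | ha
    · exact .inl (zero_smul _ x)
    rcases hx with rfl | hx
    · exact .inl (smul_zero _)
    exact .inr (by rwa [normalize_smul_of_pos ha])

lemma isSphConvex_inter_hull {C : Set (E n)} {v : E n} (hC : ∀ x ∈ C, 0 < ⟪x, v⟫) :
    IsSphConvex (unitSphere n ∩ PointedCone.hull ℝ C) := by
  refine .inr ⟨⟨v, fun x ⟨hx1, hx⟩ => ?_⟩, ?_⟩
  · refine (eq_zero_or_inner_pos_of_mem_hull hC hx).resolve_left fun h => ?_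
    simp [unitSphere, h] at hx1
  · rintro u ⟨-, hu⟩ w ⟨-, hw⟩ _ ⟨a, b, ha, hb, hne, rfl⟩
    refine ⟨normalize_mem_unitSphere hne, PointedCone.smul_mem _ (by positivity) ?_⟩
    exact add_mem (PointedCone.smul_mem _ ha hu) (PointedCone.smul_mem _ hb hw)

theorem sconv_eq_inter_hull {C : Set (E n)} (hC : C ⊆ unitSphere n) {v : E n}
    (hCv : ∀ x ∈ C, 0 < ⟪x, v⟫) : sconv C = unitSphere n ∩ PointedCone.hull ℝ C := by
  refine subset_antisymm (sInter_subset_of_mem ?_) ?_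
  · exact ⟨isSphConvex_inter_hull hCv, inter_subset_left,
      fun x hx => ⟨hC hx, PointedCone.subset_hull hx⟩⟩
  rintro u ⟨hu1, hu⟩ K ⟨hK, -, hCK⟩
  have hu1 : ‖u‖ = 1 := by simpa [unitSphere] using hu1
  have hu0 : u ≠ 0 := by rintro rfl; simp at hu1
  simpa [hu1, hu0] using eq_zero_or_normalize_mem_of_mem_hull hK hC hCK hu

end Sphere

section Projection

variable {d : ℕ} {C : Set (E (d + 1))}

def liftN (p : E d) : E (d + 1) := WithLp.toLp 2 (Fin.snoc (α := fun _ => ℝ) (fun i => p i) 1)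

@[simp]
lemma liftN_last (p : E d) : liftN p (Fin.last d) = 1 := by
  simp [liftN]

@[simp]
lemma liftN_castSucc (p : E d) (i : Fin d) : liftN p i.castSucc = p i := by
  simp [liftN]

lemma PN_apply (x : E (d + 1)) (i : Fin d) : PN x i = x i.castSucc / x (Fin.last d) := rfl

@[simp]
lemma PN_liftN (p : E d) : PN (liftN p) = p := by
  ext i
  simp [PN_apply]

lemma PN_smul {c : ℝ} (hc : c ≠ 0) (x : E (d + 1)) : PN (c • x) = PN x := by
  ext i
  simp [PN_apply, mul_div_mul_left _ _ hc]

lemma smul_liftN_PN {x : E (d + 1)} (hx : x (Fin.last d) ≠ 0) :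
    x (Fin.last d) • liftN (PN x) = x := by
  ext i
  induction i using Fin.lastCases with
  | last => simp
  | cast i => simp [PN_apply, mul_div_cancel₀ _ hx]

lemma liftN_ne_zero (p : E d) : liftN p ≠ 0 := fun h => by
  simpa using congrArg (· (Fin.last d)) h

lemma norm_liftN_sq (p : E d) : ‖liftN p‖ ^ 2 = ‖p‖ ^ 2 + 1 := by
  simp [EuclideanSpace.norm_sq_eq, Fin.sum_univ_castSucc]

lemma liftN_add_smul {a b : ℝ} (hab : a + b = 1) (p q : E d) :
    liftN (a • p + b • q) = a • liftN p + b • liftN q := by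
  ext i
  induction i using Fin.lastCases with
  | last => simp [hab]
  | cast i => simp

lemma PN_add {x y : E (d + 1)} (hx : 0 < x (Fin.last d)) (hy : 0 < y (Fin.last d)) :
    PN (x + y) = (x (Fin.last d) / (x (Fin.last d) + y (Fin.last d))) • PN x +
      (y (Fin.last d) / (x (Fin.last d) + y (Fin.last d))) • PN y := by
  ext i
  simp only [PN_apply, PiLp.add_apply, PiLp.smul_apply, smul_eq_mul]
  field_simp

lemma eq_zero_or_PN_mem_convexHull_of_mem_hull (hC : ∀ x ∈ C, 0 < x (Fin.last d))
    {y : E (d + 1)} (hy : y ∈ PointedCone.hull ℝ C) :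
    y = 0 ∨ 0 < y (Fin.last d) ∧ PN y ∈ convexHull ℝ (PN '' C) := by
  induction hy using Submodule.span_induction with
  | mem x hx => exact .inr ⟨hC x hx, subset_convexHull ℝ _ (mem_image_of_mem PN hx)⟩
  | zero => exact .inl rfl
  | add x y _ _ hx hy =>
    rcases hx with rfl | ⟨hx, hPx⟩
    · simpa using hy
    rcases hy with rfl | ⟨hy, hPy⟩
    · simpa using Or.inr ⟨hx, hPx⟩
    refine .inr ⟨by simp only [PiLp.add_apply]; positivity, ?_⟩
    rw [PN_add hx hy]
    exact convex_convexHull ℝ _ hPx hPy (by positivity) (by positivity) (by field_simp)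
  | smul a x _ hx =>
    obtain ⟨a, ha⟩ := a
    rw [Nonneg.mk_smul]
    rcases ha.eq_or_lt with rfl | ha
    · exact .inl (zero_smul _ x)
    rcases hx with rfl | ⟨hx, hPx⟩
    · exact .inl (smul_zero _)
    exact .inr ⟨by simp only [PiLp.smul_apply, smul_eq_mul]; positivity, by rwa [PN_smul ha.ne']⟩

lemma liftN_mem_hull_of_mem_convexHull (hC : ∀ x ∈ C, 0 < x (Fin.last d)) {p : E d}
    (hp : p ∈ convexHull ℝ (PN '' C)) : liftN p ∈ PointedCone.hull ℝ C := by
  refine convexHull_min (t := {p | liftN p ∈ PointedCone.hull ℝ C}) ?_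
    (fun p hp q hq a b ha hb hab => ?_) hp
  · rintro _ ⟨x, hx, rfl⟩
    rw [mem_ofPred_eq, ← (PointedCone.hull ℝ C).smul_mem_iff (hC x hx), smul_liftN_PN (hC x hx).ne']
    exact PointedCone.subset_hull hx
  · rw [mem_ofPred_eq, liftN_add_smul hab]
    exact add_mem (PointedCone.smul_mem _ ha hp) (PointedCone.smul_mem _ hb hq)

theorem mem_hull_iff_PN_mem_convexHull (hC : ∀ x ∈ C, 0 < x (Fin.last d)) {y : E (d + 1)}
    (hy : 0 < y (Fin.last d)) : y ∈ PointedCone.hull ℝ C ↔ PN y ∈ convexHull ℝ (PN '' C) := by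
  refine ⟨fun h => ?_, fun h => ?_⟩
  · rcases eq_zero_or_PN_mem_convexHull_of_mem_hull hC h with rfl | ⟨-, hP⟩
    · simp at hy
    · exact hP
  · rw [← smul_liftN_PN hy.ne']
    exact PointedCone.smul_mem _ hy.le (liftN_mem_hull_of_mem_convexHull hC h)

lemma inner_eLast (u : E (d + 1)) : ⟪u, eLast d⟫ = u (Fin.last d) := by
  simp [eLast, EuclideanSpace.inner_single_right]

lemma mem_cap_eLast_iff {u : E (d + 1)} (hu : u ∈ unitSphere (d + 1))
    (hlast : 0 < u (Fin.last d)) {ρ : ℝ} (hρ₀ : 0 ≤ ρ) (hρ : ρ < π / 2) :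
    u ∈ cap (eLast d) ρ ↔ ‖PN u‖ ≤ tan ρ := by
  have hcos : 0 < cos ρ := cos_pos_of_mem_Ioo ⟨by linarith [pi_pos], hρ⟩
  have hlast_sq : u (Fin.last d) ^ 2 = (1 + ‖PN u‖ ^ 2)⁻¹ := by
    have hu1 : ‖u‖ = 1 := by simpa [unitSphere] using hu
    have h := congrArg (‖·‖ ^ 2) (smul_liftN_PN hlast.ne')
    simp only [norm_smul, mul_pow, norm_liftN_sq, Real.norm_eq_abs, sq_abs, hu1] at h
    exact eq_inv_of_mul_eq_one_left (by linarith)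
  simp only [cap, mem_ofPred_eq, hu, true_and, inner_eLast]
  rw [← pow_le_pow_iff_left₀ hcos.le hlast.le two_ne_zero, ← inv_one_add_tan_sq hcos.ne',
    hlast_sq, inv_le_inv₀ (by positivity) (by positivity), add_le_add_iff_left,
    pow_le_pow_iff_left₀ (norm_nonneg _) (tan_nonneg_of_nonneg_of_le_pi_div_two hρ₀ hρ.le)
    two_ne_zero]

end Projection

/-- For a finite set `C'` in the open northern hemisphere, the ball `B(e_{d+1}, tan ρ')`
is in `conv (P_N(C'))` iff the cap `C(e_{d+1}, ρ')` is in the spherical convex hull of `C'`. -/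
theorem ball_subset_iff_cap_subset (d : ℕ) (C' : Finset (E (d + 1)))
    (hC' : ∀ x ∈ C', x ∈ unitSphere (d + 1) ∧ 0 < x (Fin.last d))
    (ρ' : ℝ) (hρ' : ρ' ∈ Set.Ioo 0 (Real.pi / 2)) :
    Metric.closedBall (0 : E d) (Real.tan ρ') ⊆ convexHull ℝ (PN '' (C' : Set (E (d + 1)))) ↔
      cap (eLast d) ρ' ⊆ sconv (C' : Set (E (d + 1))) := by
  obtain ⟨hρ₀, hρ⟩ := hρ'
  have hpos : ∀ x ∈ (C' : Set (E (d + 1))), 0 < x (Fin.last d) := fun x hx => (hC' x hx).2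
  rw [sconv_eq_inter_hull (fun x hx => (hC' x hx).1) (v := eLast d) (by simpa [inner_eLast])]
  constructor
  · rintro hball u hucap
    have hlast : 0 < u (Fin.last d) :=
      (cos_pos_of_mem_Ioo ⟨by linarith, hρ⟩).trans_le (inner_eLast u ▸ hucap.2)
    refine ⟨hucap.1, (mem_hull_iff_PN_mem_convexHull hpos hlast).2 (hball ?_)⟩
    rwa [mem_closedBall_zero_iff, ← mem_cap_eLast_iff hucap.1 hlast hρ₀.le hρ]
  · intro hcap p hp
    set u := ‖liftN p‖⁻¹ • liftN p
    have hu : u ∈ unitSphere (d + 1) := normalize_mem_unitSphere (liftN_ne_zero p)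
    have hlast : 0 < u (Fin.last d) := by simp [u, liftN_ne_zero]
    have hPN : PN u = p := by rw [PN_smul (by simp [liftN_ne_zero]), PN_liftN]
    rw [mem_closedBall_zero_iff, ← hPN, ← mem_cap_eLast_iff hu hlast hρ₀.le hρ] at hp
    rw [← hPN]
    exact (mem_hull_iff_PN_mem_convexHull hpos hlast).1 (hcap hp).2
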